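/- For every nonnegative integer i and r, the Bernoulli polynomial evaluated at r satisfies B_i(r) = Σ_{k=0}^{i} (-1)^k (k!/(k+1)) {i+r, k+r}_r, where {n,m}_r denotes the r-Stirling number of the second kind. -/

import Mathlib

/-!
Both sides, as sequences `a` in `i`, satisfy `∑_{j ≤ n} C(n+1, j) a_j = (n+1) r^n`, the recurrence
that determines `B_n(r)`. For the Stirling side, exchanging the two sums reduces this to
`∑_{j ≤ n} C(n+1, j) {j+r, k+r}_r = (k+1) {n+1+r, k+1+r}_r`, a consequence of the binomial
expansion `{n+r+1, k+r+1}_{r+1} = ∑_j C(n, j) {j+r, k+r}_r`, and to the identity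
`∑_k (-1)^k k! {n+1+r, k+1+r}_r = (n+1) r^n`, which telescopes after one step of the recurrence.
-/

open Finset

/-- The `r`-Stirling numbers of the second kind: `rS2 r i j = {i+r, j+r}_r`,
with generating function `∑_i {i+r, j+r}_r t^i/i! = (1/j!) e^{rt}(e^t-1)^j`. -/
def rS2 (r : ℕ) : ℕ → ℕ → ℕ
  | 0, 0 => 1
  | 0, _ + 1 => 0
  | i + 1, 0 => r * rS2 r i 0
  | i + 1, j + 1 => (j + 1 + r) * rS2 r i (j + 1) + rS2 r i j

open Nat

namespace rS2

variable (r : ℕ)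

@[simp] lemma zero_zero : rS2 r 0 0 = 1 := rfl

@[simp] lemma zero_succ (k : ℕ) : rS2 r 0 (k + 1) = 0 := rfl

@[simp] lemma succ_zero (n : ℕ) : rS2 r (n + 1) 0 = r * rS2 r n 0 := rfl

lemma succ_succ (n k : ℕ) : rS2 r (n + 1) (k + 1) = (k + 1 + r) * rS2 r n (k + 1) + rS2 r n k :=
  rfl

lemma zero_right (n : ℕ) : rS2 r n 0 = r ^ n := by
  induction n with
  | zero => rfl
  | succ n ih => rw [succ_zero, ih, pow_succ, mul_comm]

lemma eq_zero_of_lt : ∀ {n k : ℕ}, n < k → rS2 r n k = 0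
  | 0, _ + 1, _ => rfl
  | n + 1, k + 1, h => by
    rw [succ_succ, eq_zero_of_lt (by omega : n < k + 1), eq_zero_of_lt (by omega : n < k), mul_zero]

lemma param_succ (n k : ℕ) : rS2 (r + 1) n k = (k + 1) * rS2 r n (k + 1) + rS2 r n k := by
  induction n generalizing k with
  | zero => cases k <;> rfl
  | succ n ih =>
    cases k with
    | zero => rw [succ_zero, ih, succ_zero, succ_succ]; ring
    | succ k => rw [succ_succ, succ_succ, succ_succ, ih, ih]; ring

lemma sum_choose_mul (n k : ℕ) :
    ∑ j ∈ range (n + 1), n.choose j * rS2 r j k = rS2 (r + 1) n k := by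
  induction n generalizing k with
  | zero => cases k <;> rfl
  | succ n ih =>
    have pascal := Finset.sum_choose_succ_mul (R := ℕ) (fun j _ => rS2 r j k) n
    simp only [Nat.cast_id] at pascal
    rw [pascal, ih]
    cases k with
    | zero => simp_rw [succ_zero, mul_left_comm _ r, ← mul_sum, ih]; ring
    | succ k =>
      simp_rw [succ_succ, mul_add, mul_left_comm _ (k + 1 + r), sum_add_distrib, ← mul_sum, ih]
      ring

lemma sum_choose_succ_mul (n k : ℕ) :
    ∑ j ∈ range (n + 1), (n + 1).choose j * rS2 r j k = (k + 1) * rS2 r (n + 1) (k + 1) := by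
  have h := sum_choose_mul r (n + 1) k
  rw [sum_range_succ, Nat.choose_self, one_mul, param_succ] at h
  omega

lemma sum_range_mul_of_le {R : Type*} [CommSemiring R] (f : ℕ → R) {n N : ℕ} (h : n + 1 ≤ N) :
    ∑ k ∈ range N, f k * rS2 r n k = ∑ k ∈ range (n + 1), f k * rS2 r n k := by
  refine (sum_subset (range_subset_range.2 h) fun k _ hk => ?_).symm
  rw [eq_zero_of_lt r (by simpa using hk), Nat.cast_zero, mul_zero]

lemma sum_neg_one_pow_mul_factorial_mul {R : Type*} [CommRing R] (n : ℕ) :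
    ∑ k ∈ range (n + 1), (-1 : R) ^ k * k ! * rS2 r (n + 1) (k + 1) = (n + 1) * r ^ n := by
  induction n with
  | zero => simp [succ_succ]
  | succ n ih =>
    set A : ℕ → R := fun k => (-1) ^ k * k ! * rS2 r (n + 1) k
    have step : ∀ k, (-1 : R) ^ k * k ! * rS2 r (n + 2) (k + 1) =
        (A k - A (k + 1)) + r * ((-1) ^ k * k ! * rS2 r (n + 1) (k + 1)) := by
      intro k
      simp only [A, succ_succ, Nat.factorial_succ]
      push_cast
      ring
    have hA0 : A 0 = r ^ (n + 1) := by simp [A, zero_right]; ring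
    have hA : A (n + 2) = 0 := by simp [A, eq_zero_of_lt r (Nat.lt_succ_self (n + 1))]
    have hlast : rS2 r (n + 1) (n + 1 + 1) = 0 := eq_zero_of_lt r (Nat.lt_succ_self _)
    simp_rw [step, sum_add_distrib, sum_range_sub', ← mul_sum, sum_range_succ _ (n + 1), hlast, ih,
      hA0, hA]
    push_cast
    ring

end rS2

lemma Polynomial.sum_choose_mul_bernoulli_eval (n : ℕ) (x : ℚ) :
    ∑ j ∈ range (n + 1), ((n + 1).choose j : ℚ) * (Polynomial.bernoulli j).eval x =
      (n + 1) * x ^ n := by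
  have h := congrArg (Polynomial.eval x) (Polynomial.sum_bernoulli n)
  simpa only [Polynomial.eval_finsetSum, Polynomial.eval_smul, smul_eq_mul,
    Polynomial.eval_monomial] using h

lemma eq_bernoulli_eval_of_sum_choose_mul {x : ℚ} {a : ℕ → ℚ}
    (ha : ∀ n, ∑ j ∈ range (n + 1), ((n + 1).choose j : ℚ) * a j = (n + 1) * x ^ n) (n : ℕ) :
    a n = (Polynomial.bernoulli n).eval x := by
  induction n using Nat.strong_induction_on with
  | _ n ih =>
    have h := (ha n).trans (Polynomial.sum_choose_mul_bernoulli_eval n x).symm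
    rw [sum_range_succ, sum_range_succ, sum_congr rfl fun j hj => by rw [ih j (mem_range.1 hj)],
      add_left_cancel_iff, Nat.choose_succ_self_right] at h
    exact mul_left_cancel₀ (by positivity) h

lemma sum_choose_mul_sum_rS2 (r n : ℕ) :
    ∑ j ∈ range (n + 1), ((n + 1).choose j : ℚ) *
        ∑ k ∈ range (j + 1), (-1) ^ k * (k ! : ℚ) / ((k : ℚ) + 1) * (rS2 r j k : ℚ) =
      (n + 1) * r ^ n := by
  calc _ = ∑ j ∈ range (n + 1), ∑ k ∈ range (n + 1),
          (-1) ^ k * (k ! : ℚ) / ((k : ℚ) + 1) * ((n + 1).choose j * rS2 r j k) := by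
        refine sum_congr rfl fun j hj => ?_
        rw [← rS2.sum_range_mul_of_le r _ (mem_range.1 hj), mul_sum]
        exact sum_congr rfl fun k _ => by ring
    _ = ∑ k ∈ range (n + 1), (-1) ^ k * (k ! : ℚ) * rS2 r (n + 1) (k + 1) := by
        rw [sum_comm]
        refine sum_congr rfl fun k _ => ?_
        have h : ∑ j ∈ range (n + 1), ((n + 1).choose j : ℚ) * rS2 r j k =
            (k + 1) * rS2 r (n + 1) (k + 1) := by exact_mod_cast rS2.sum_choose_succ_mul r n k
        rw [← mul_sum, h]
        field_simp
    _ = (n + 1) * r ^ n := rS2.sum_neg_one_pow_mul_factorial_mul r n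

theorem bernoulli_eval_eq_rStirling_sum (i r : ℕ) :
    (Polynomial.bernoulli i).eval (r : ℚ) =
      ∑ k ∈ Finset.range (i + 1),
        (-1) ^ k * (Nat.factorial k : ℚ) / ((k : ℚ) + 1) * (rS2 r i k : ℚ) :=
  (eq_bernoulli_eval_of_sum_choose_mul (sum_choose_mul_sum_rS2 r) i).symm
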